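/- If E is a hyperfinite Borel equivalence relation on a standard Borel space X, then E has property 𝗉 (Borel pseudo-intersecting). -/

import Mathlib

open Filter

/-- Eventual equality on `2^ℕ` (i.e. finite symmetric difference, `=*`). -/
def EvEqB (x y : ℕ → Bool) : Prop := ∀ᶠ n in Filter.atTop, x n = y n

/-- `x` is an infinite subset of `ℕ` (i.e. `x ∈ [ℕ]^ℕ`). -/
def IsInfSet (x : ℕ → Bool) : Prop := {n | x n = true}.Infinite

/-- Almost containment `x ⊆* y`: `x \ y` is finite. -/
def AlmostSubset (x y : ℕ → Bool) : Prop := {n | x n = true ∧ y n = false}.Finite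

/-- The complement `ℕ \ x` of a subset of `ℕ`. -/
def complB (x : ℕ → Bool) : ℕ → Bool := fun n => !(x n)

/-- A family of subsets of `ℕ` is centered if every finite subfamily has
infinite intersection. -/
def CenteredFam (F : Set (ℕ → Bool)) : Prop :=
  ∀ s : Finset (ℕ → Bool), ↑s ⊆ F → {k | ∀ A ∈ s, A k = true}.Infinite

/-- `E` has property `𝗉` (Borel pseudo-intersecting): for every Borel
homomorphism `φ : X → ([ℕ]^ℕ)^ℕ` from `E` to `E_set` whose associated families
are centered, there is a Borel homomorphism `ψ : X → [ℕ]^ℕ` from `E` to `=*`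
with `ψ(x) ⊆* φ(x)(n)` for all `x` and `n`. -/
def PropertyP {X : Type*} [MeasurableSpace X] (E : X → X → Prop) : Prop :=
  ∀ φ : X → ℕ → ℕ → Bool, Measurable φ → (∀ x n, IsInfSet (φ x n)) →
    (∀ x y, E x y → Set.range (φ x) = Set.range (φ y)) →
    (∀ x, CenteredFam (Set.range (φ x))) →
    ∃ ψ : X → ℕ → Bool, Measurable ψ ∧ (∀ x, IsInfSet (ψ x)) ∧
      (∀ x y, E x y → EvEqB (ψ x) (ψ y)) ∧
      ∀ x n, AlmostSubset (ψ x) (φ x n)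

/-- A finite Borel equivalence relation: a Borel equivalence relation all of
whose classes are finite. -/
def FiniteBorelER {X : Type*} [MeasurableSpace X] (F : X → X → Prop) : Prop :=
  Equivalence F ∧ MeasurableSet {p : X × X | F p.1 p.2} ∧ ∀ x, {y | F x y}.Finite

/-!
Write `E = ⋃ n, F n` and let the marker `a n x` be the least `k ≥ n` lying in `φ y m` for all `y`
in the `F n`-class of `x` and all `m ≤ n`: these finitely many sets belong to the centered family
`range (φ x)`. Then `ψ x = {a n x | n}` works: `ψ x \ φ x m` consists of markers of stages
`n < m`, and `a n` is `F n`-invariant, so `E`-related points have the same markers from some stage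
on. The markers are Borel because projections of Borel sets with finite sections are Borel
(Lusin–Novikov). This follows from Novikov's separation theorem, applied to the pairs `(x, y)`
whose `y` is not yet singled out in its section by the first `k` bits of a Borel coding, and
Novikov's theorem is proved like Lusin's separation theorem, by refining cylinders of Baire space.
-/

open Set Function PiNat TopologicalSpace MeasureTheory Filter

section Novikov

variable {α : Type*}

def cylinderImages (f : ℕ → (ℕ → ℕ) → α) (σ : ℕ → (ℕ → ℕ) × ℕ) (n : ℕ) : Set α :=
  f n '' cylinder (σ n).1 (σ n).2

theorem cylinderImages_update (f : ℕ → (ℕ → ℕ) → α) (σ : ℕ → (ℕ → ℕ) × ℕ)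
    (j : ℕ) (p : (ℕ → ℕ) × ℕ) :
    cylinderImages f (update σ j p) = update (cylinderImages f σ) j (f j '' cylinder p.1 p.2) :=
  funext fun n => apply_update (fun n (p : (ℕ → ℕ) × ℕ) => f n '' cylinder p.1 p.2) σ j p n

variable [MeasurableSpace α]

def MeasurablySeparableFamily (S : ℕ → Set α) : Prop :=
  ∃ D : ℕ → Set α, (∀ n, MeasurableSet (D n)) ∧ (∀ n, S n ⊆ D n) ∧ ⋂ n, D n = ∅

namespace MeasurablySeparableFamily

theorem of_disjoint {S : ℕ → Set α} {i j : ℕ} {u v : Set α} (hu : MeasurableSet u)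
    (hv : MeasurableSet v) (huv : Disjoint u v) (hi : S i ⊆ u) (hj : S j ⊆ v) :
    MeasurablySeparableFamily S := by
  classical
  refine ⟨fun n => (if n = i then u else univ) ∩ (if n = j then v else univ), fun n => ?_,
    fun n => ?_, ?_⟩
  · exact (by split_ifs <;> simp [hu] : MeasurableSet _).inter
      (by split_ifs <;> simp [hv] : MeasurableSet _)
  · refine subset_inter ?_ ?_ <;> split_ifs with h <;> first | exact subset_univ _ | subst h
    exacts [hi, hj]
  · refine eq_empty_of_subset_empty fun x hx => ?_
    have hxi := (mem_iInter.1 hx i).1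
    have hxj := (mem_iInter.1 hx j).2
    simp only at hxi hxj
    exact huv.le_bot ⟨hxi, hxj⟩

theorem of_update_iUnion {S T : ℕ → Set α} {j : ℕ} (hS : S j ⊆ ⋃ i, T i)
    (h : ∀ i, MeasurablySeparableFamily (update S j (T i))) : MeasurablySeparableFamily S := by
  classical
  choose D hDm hDS hDe using h
  refine ⟨update (fun n => ⋂ i, (D i j)ᶜ ∪ D i n) j (⋃ i, D i j), fun n => ?_, fun n => ?_, ?_⟩
  · rcases eq_or_ne n j with rfl | hn
    · simpa using MeasurableSet.iUnion fun i => hDm i n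
    · simpa [hn] using MeasurableSet.iInter fun i => (hDm i j).compl.union (hDm i n)
  · rcases eq_or_ne n j with rfl | hn
    · simpa using hS.trans (iUnion_mono fun i => by simpa using hDS i n)
    · simpa [hn] using fun i => subset_union_of_subset_right (by simpa [hn] using hDS i n) _
  · refine eq_empty_of_subset_empty fun x hx => ?_
    obtain ⟨i, hxi⟩ := mem_iUnion.1 (by simpa using mem_iInter.1 hx j)
    rw [← hDe i]
    refine mem_iInter.2 fun n => ?_
    rcases eq_or_ne n j with rfl | hn
    · exact hxi
    · have := mem_iInter.1 hx n
      simp only [ne_eq, hn, not_false_eq_true, update_of_ne, mem_iInter, mem_union,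
        mem_compl_iff] at this
      exact (this i).resolve_left (not_not.2 hxi)

end MeasurablySeparableFamily

theorem exists_refine_of_not_measurablySeparableFamily {f : ℕ → (ℕ → ℕ) → α}
    {σ : ℕ → (ℕ → ℕ) × ℕ} (hσ : ¬ MeasurablySeparableFamily (cylinderImages f σ)) (j : ℕ) :
    ∃ y ∈ cylinder (σ j).1 (σ j).2,
      ¬ MeasurablySeparableFamily (cylinderImages f (update σ j (y, (σ j).2 + 1))) := by
  contrapose! hσ
  refine MeasurablySeparableFamily.of_update_iUnion (j := j)
    (T := fun i => f j '' cylinder (update (σ j).1 (σ j).2 i) ((σ j).2 + 1)) ?_ fun i => ?_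
  · rw [← image_iUnion, iUnion_cylinder_update (σ j).1 (σ j).2]
    rfl
  · simpa [cylinderImages_update] using hσ _ (update_mem_cylinder _ _ i)

theorem tendsto_atTop_of_monotone_of_frequently_lt {d : ℕ → ℕ} (hd : Monotone d)
    (hlt : ∃ᶠ t in atTop, d t < d (t + 1)) : Tendsto d atTop atTop := by
  refine tendsto_atTop_atTop.2 fun N => ?_
  induction N with
  | zero => exact ⟨0, fun _ _ => Nat.zero_le _⟩
  | succ N ih =>
    obtain ⟨T, hT⟩ := ih
    obtain ⟨t, htT, ht⟩ := frequently_atTop.1 hlt T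
    exact ⟨t + 1, fun s hs => (hT t htT).trans_lt ht |>.trans_le (hd hs)⟩

theorem exists_forall_mem_cylinder {x : ℕ → ℕ → ℕ} {d : ℕ → ℕ}
    (hanti : Antitone fun t => cylinder (x t) (d t)) (hd : Tendsto d atTop atTop) :
    ∃ z : ℕ → ℕ, ∀ t, z ∈ cylinder (x t) (d t) := by
  have hlong : ∀ m, ∃ t, m < d t := fun m => (hd.eventually_gt_atTop m).exists
  choose τ hτ using hlong
  refine ⟨fun m => x (τ m) m, fun t => mem_cylinder_iff.2 fun m hm => ?_⟩
  have h₁ := mem_cylinder_iff.1 (hanti (le_max_left t (τ m)) (self_mem_cylinder _ _)) m hm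
  have h₂ := mem_cylinder_iff.1 (hanti (le_max_right t (τ m)) (self_mem_cylinder _ _)) m (hτ m)
  exact h₂.symm.trans h₁

theorem exists_cylinder_subset_of_isOpen {u : Set (ℕ → ℕ)} (hu : IsOpen u) {z : ℕ → ℕ}
    (hz : z ∈ u) : ∃ N, cylinder z N ⊆ u := by
  obtain ⟨_, ⟨y, N, rfl⟩, hzy, hsub⟩ :=
    (isTopologicalBasis_cylinders fun _ => ℕ).exists_subset_of_mem_open hz hu
  exact ⟨N, (mem_cylinder_iff_eq.1 hzy).symm ▸ hsub⟩

/-- Refining at time `t` the cylinder of slot `t.unpair.1` yields non-separable states in which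
every slot is refined infinitely often. -/
theorem exists_refining_sequence {f : ℕ → (ℕ → ℕ) → α}
    (h : ¬ MeasurablySeparableFamily fun n => range (f n)) :
    ∃ σ : ℕ → ℕ → (ℕ → ℕ) × ℕ, (∀ t, ¬ MeasurablySeparableFamily (cylinderImages f (σ t))) ∧
      (∀ j, Antitone fun t => cylinder (σ t j).1 (σ t j).2) ∧
      ∀ j, Tendsto (fun t => (σ t j).2) atTop atTop := by
  let State := {σ : ℕ → (ℕ → ℕ) × ℕ // ¬ MeasurablySeparableFamily (cylinderImages f σ)}
  choose y hy hbad using fun (σ : State) j => exists_refine_of_not_measurablySeparableFamily σ.2 j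
  have h₀ : ¬ MeasurablySeparableFamily (cylinderImages f fun _ => (0, 0)) := by
    have : (cylinderImages f fun _ => (0, 0)) = fun n => range (f n) :=
      funext fun n => by simp [cylinderImages]
    rwa [this]
  let seq : ℕ → State := fun t =>
    Nat.rec ⟨_, h₀⟩ (fun t σ => ⟨_, hbad σ t.unpair.1⟩) t
  have hseq : ∀ t, (seq (t + 1)).1 =
      update (seq t).1 t.unpair.1 (y (seq t) t.unpair.1, ((seq t).1 t.unpair.1).2 + 1) :=
    fun t => rfl
  have hstep : ∀ t j, cylinder ((seq (t + 1)).1 j).1 ((seq (t + 1)).1 j).2 ⊆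
        cylinder ((seq t).1 j).1 ((seq t).1 j).2 ∧
      ((seq t).1 j).2 + (if t.unpair.1 = j then 1 else 0) = ((seq (t + 1)).1 j).2 := by
    intro t j
    rw [hseq]
    rcases eq_or_ne t.unpair.1 j with rfl | hj
    · refine ⟨?_, by simp⟩
      simp only [update_self]
      rw [← mem_cylinder_iff_eq.1 (hy (seq t) t.unpair.1)]
      exact cylinder_anti _ (Nat.le_succ _)
    · simp [update_of_ne hj.symm, hj]
  refine ⟨fun t => (seq t).1, fun t => (seq t).2, fun j => antitone_nat_of_succ_le fun t =>
    (hstep t j).1, fun j => tendsto_atTop_of_monotone_of_frequently_lt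
      (monotone_nat_of_le_succ fun t => (hstep t j).2 ▸ Nat.le_add_right _ _) ?_⟩
  refine frequently_atTop.2 fun T => ⟨Nat.pair j T, Nat.right_le_pair j T, ?_⟩
  have := (hstep (Nat.pair j T) j).2
  simp only [Nat.unpair_pair, if_true] at this ⊢
  omega

variable [TopologicalSpace α] [T2Space α] [OpensMeasurableSpace α]

theorem measurablySeparableFamily_range {f : ℕ → (ℕ → ℕ) → α} (hf : ∀ n, Continuous (f n))
    (h : ⋂ n, range (f n) = ∅) : MeasurablySeparableFamily fun n => range (f n) := by
  by_contra hsep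
  obtain ⟨σ, hbad, hanti, hdepth⟩ := exists_refining_sequence hsep
  choose z hz using fun j => exists_forall_mem_cylinder (hanti j) (hdepth j)
  obtain ⟨j, hj⟩ : ∃ j, f j (z j) ≠ f 0 (z 0) := by
    by_contra! hall
    have : f 0 (z 0) ∈ ⋂ n, range (f n) := mem_iInter.2 fun n => hall n ▸ mem_range_self (z n)
    simp [h] at this
  obtain ⟨u, v, hu, hv, hju, h0v, huv⟩ := t2_separation hj
  -- the images of the late cylinders around the limit points `z j` and `z 0` are separated
  have hsmall : ∀ n {w : Set α}, IsOpen w → f n (z n) ∈ w →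
      ∀ᶠ t in atTop, cylinderImages f (σ t) n ⊆ w := by
    intro n w hw hzw
    obtain ⟨N, hN⟩ := exists_cylinder_subset_of_isOpen (hw.preimage (hf n)) hzw
    filter_upwards [(hdepth n).eventually_ge_atTop N] with t ht
    rw [cylinderImages, image_subset_iff, ← mem_cylinder_iff_eq.1 (hz n t)]
    exact (cylinder_anti _ ht).trans hN
  obtain ⟨t, htu, htv⟩ := ((hsmall j hu hju).and (hsmall 0 hv h0v)).exists
  exact hbad t (.of_disjoint hu.measurableSet hv.measurableSet huv htu htv)

/-- **Novikov's separation theorem**. -/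
theorem AnalyticSet.measurablySeparableFamily {A : ℕ → Set α} (hA : ∀ n, AnalyticSet (A n))
    (h : ⋂ n, A n = ∅) : MeasurablySeparableFamily A := by
  by_cases hemp : ∃ n, A n = ∅
  · obtain ⟨n, hn⟩ := hemp
    exact .of_disjoint .empty .empty (disjoint_empty ∅) hn.le hn.le
  simp only [not_exists] at hemp
  choose f hf hfA using fun n => (AnalyticSet_def (A n) ▸ hA n).resolve_left (hemp n)
  have hA' : A = fun n => range (f n) := funext fun n => (hfA n).symm
  subst hA'
  exact measurablySeparableFamily_range hf h

end Novikov

section FiniteSections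

variable {X Y : Type*}

def prefixAmbiguous (e : Y → ℕ → Bool) (P : Set (X × Y)) (n : ℕ) : Set (X × Y) :=
  {p | p ∈ P ∧ ∃ z, (p.1, z) ∈ P ∧ z ≠ p.2 ∧ ∀ i : Fin n, e z i = e p.2 i}

theorem iInter_prefixAmbiguous_eq_empty {e : Y → ℕ → Bool} (he : Injective e) {P : Set (X × Y)}
    (hfin : ∀ x, (Prod.mk x ⁻¹' P).Finite) : ⋂ n, prefixAmbiguous e P n = ∅ := by
  refine eq_empty_of_forall_notMem fun ⟨x, y⟩ hxy => ?_
  have hsep : ∀ z ∈ Prod.mk x ⁻¹' P, ∀ᶠ n in atTop, z ≠ y → ∃ i : Fin n, e z i ≠ e y i := by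
    intro z _
    by_cases hzy : z = y
    · exact Eventually.of_forall fun _ h => (h hzy).elim
    obtain ⟨i, hi⟩ := Function.ne_iff.1 (he.ne hzy)
    filter_upwards [eventually_gt_atTop i] with n hn
    exact fun _ => ⟨⟨i, hn⟩, hi⟩
  obtain ⟨n, hn⟩ := ((hfin x).eventually_all.2 hsep).exists
  obtain ⟨-, z, hz, hzy, hzn⟩ := mem_iInter.1 hxy n
  obtain ⟨i, hi⟩ := hn z hz hzy
  exact hi (hzn i)

variable [MeasurableSpace X] [StandardBorelSpace X] [MeasurableSpace Y] [StandardBorelSpace Y]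

theorem analyticSet_prefixAmbiguous [TopologicalSpace (X × Y)] [OpensMeasurableSpace (X × Y)]
    [SecondCountableTopology (X × Y)] {e : Y → ℕ → Bool} (he : Measurable e)
    {P : Set (X × Y)} (hP : MeasurableSet P) (n : ℕ) :
    AnalyticSet (prefixAmbiguous e P n) := by
  have hW : MeasurableSet {q : (X × Y) × Y | q.1 ∈ P ∧ (q.1.1, q.2) ∈ P ∧ q.2 ≠ q.1.2 ∧
      ∀ i : Fin n, e q.2 i = e q.1.2 i} := by
    refine measurableSet_setOfPred.2 ?_
    fun_prop (disch := assumption)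
  convert hW.analyticSet_image measurable_fst using 1
  ext ⟨x, y⟩
  simp [prefixAmbiguous]

/-- The **Lusin–Novikov theorem**, for finite sections. -/
theorem MeasurableSet.image_fst_of_finite_sections {P : Set (X × Y)} (hP : MeasurableSet P)
    (hfin : ∀ x, (Prod.mk x ⁻¹' P).Finite) : MeasurableSet (Prod.fst '' P) := by
  obtain ⟨e, he, hinj⟩ := MeasurableSpace.measurable_injection_nat_bool_of_countablySeparated Y
  let := upgradeStandardBorel (X × Y)
  obtain ⟨D, hDm, hAD, hDe⟩ := AnalyticSet.measurablySeparableFamily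
    (analyticSet_prefixAmbiguous he hP) (iInter_prefixAmbiguous_eq_empty hinj hfin)
  let G : (Σ n, Fin n → Bool) → Set (X × Y) := fun c =>
    (P \ D c.1) ∩ {p | (fun i : Fin c.1 => e p.2 i) = c.2}
  have hG : ∀ c, MeasurableSet (G c) := fun c =>
    (hP.diff (hDm c.1)).inter (measurableSet_setOfPred.2 (by fun_prop))
  have hGinj : ∀ c, InjOn Prod.fst (G c) := by
    rintro ⟨n, s⟩ ⟨x, y⟩ ⟨⟨hy, hyD⟩, hys⟩ ⟨x', y'⟩ ⟨⟨hy', -⟩, hy's⟩ (rfl : x = x')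
    by_contra hne
    refine hyD (hAD n ⟨hy, y', hy', fun h => hne (by rw [h]), fun i => ?_⟩)
    exact congrFun (hy's.trans hys.symm) i
  have hcover : Prod.fst '' P = ⋃ c, Prod.fst '' G c := by
    refine subset_antisymm ?_ (iUnion_subset fun c => image_mono fun p hp => hp.1.1)
    rintro _ ⟨p, hp, rfl⟩
    obtain ⟨n, hn⟩ : ∃ n, p ∉ D n := by simpa using (hDe ▸ notMem_empty p : p ∉ ⋂ n, D n)
    exact mem_iUnion.2 ⟨⟨n, fun i => e p.2 i⟩, p, ⟨⟨hp, hn⟩, rfl⟩, rfl⟩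
  rw [hcover]
  exact MeasurableSet.iUnion fun c => (hG c).image_of_measurable_injOn measurable_fst (hGinj c)

end FiniteSections

section RangeB

open Classical in
noncomputable def rangeB (b : ℕ → ℕ) : ℕ → Bool := fun k => decide (k ∈ range b)

@[simp]
theorem rangeB_eq_true {b : ℕ → ℕ} {k : ℕ} : rangeB b k = true ↔ k ∈ range b := by
  simp [rangeB]

theorem isInfSet_rangeB {b : ℕ → ℕ} (hb : ∀ n, n ≤ b n) : IsInfSet (rangeB b) := by
  refine infinite_of_not_bddAbove fun ⟨M, hM⟩ => ?_
  have := hM (show b (M + 1) ∈ {k | rangeB b k = true} by simp)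
  have := hb (M + 1)
  omega

theorem evEqB_rangeB {b b' : ℕ → ℕ} (h : ∀ᶠ n in atTop, b n = b' n) :
    EvEqB (rangeB b) (rangeB b') := by
  obtain ⟨N, hN⟩ := eventually_atTop.1 h
  have hmem : ∀ {c c' : ℕ → ℕ}, (∀ n ≥ N, c n = c' n) → ∀ k ∉ c '' Iio N,
      k ∈ range c → k ∈ range c' := by
    rintro c c' hcc' _ hk ⟨n, rfl⟩
    exact ⟨n, (hcc' n (not_lt.1 fun hn => hk ⟨n, hn, rfl⟩)).symm⟩
  rw [EvEqB, ← Nat.cofinite_eq_atTop]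
  filter_upwards [((finite_Iio N).image b).eventually_cofinite_notMem,
    ((finite_Iio N).image b').eventually_cofinite_notMem] with k hk hk'
  rw [Bool.eq_iff_iff, rangeB_eq_true, rangeB_eq_true]
  exact ⟨hmem hN k hk, hmem (fun n hn => (hN n hn).symm) k hk'⟩

theorem almostSubset_rangeB {b : ℕ → ℕ} {A : ℕ → Bool} (h : ∀ᶠ n in atTop, A (b n) = true) :
    AlmostSubset (rangeB b) A := by
  obtain ⟨N, hN⟩ := eventually_atTop.1 h
  refine ((finite_Iio N).image b).subset ?_
  rintro _ ⟨hk, hA⟩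
  obtain ⟨n, rfl⟩ := rangeB_eq_true.1 hk
  exact ⟨n, mem_Iio.2 (not_le.1 fun hn => by simp [hN n hn] at hA), rfl⟩

theorem measurable_rangeB {X : Type*} [MeasurableSpace X] {a : ℕ → X → ℕ}
    (ha : ∀ n, Measurable (a n)) : Measurable fun x => rangeB fun n => a n x := by
  refine measurable_pi_lambda _ fun k => measurable_to_bool ?_
  have : (fun x => rangeB (fun n => a n x) k) ⁻¹' {true} = ⋃ n, a n ⁻¹' {k} := by
    ext x
    simp
  rw [this]
  exact .iUnion fun n => ha n (measurableSet_singleton k)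

end RangeB

theorem CenteredFam.exists_ge_forall_of_finite {S T : Set (ℕ → Bool)} (hS : CenteredFam S)
    (hT : T.Finite) (hTS : T ⊆ S) (N : ℕ) : ∃ k, N ≤ k ∧ ∀ A ∈ T, A k = true := by
  obtain ⟨k, hk, hNk⟩ := (hS hT.toFinset (by simpa using hTS)).exists_gt N
  exact ⟨k, hNk.le, fun A hA => hk A (hT.mem_toFinset.2 hA)⟩

section FiniteBorelER

variable {X : Type*} [MeasurableSpace X] [StandardBorelSpace X]

theorem measurableSet_forall_rel {R : X → X → Prop}
    (hR : MeasurableSet {p : X × X | R p.1 p.2}) (hfin : ∀ x, {y | R x y}.Finite) {Q : Set X}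
    (hQ : MeasurableSet Q) : MeasurableSet {x | ∀ y, R x y → y ∈ Q} := by
  have hsat := (hR.inter (hQ.compl.preimage measurable_snd)).image_fst_of_finite_sections
    fun x => (hfin x).subset fun y hy => hy.1
  convert hsat.compl using 1
  ext x
  simp

theorem FiniteBorelER.exists_measurable_invariant_witness {R : X → X → Prop}
    (hR : FiniteBorelER R) {P : X → ℕ → Prop} (hP : ∀ k, MeasurableSet {x | P x k})
    (hex : ∀ x, ∃ k, ∀ y, R x y → P y k) :
    ∃ a : X → ℕ, Measurable a ∧ (∀ x y, R x y → a x = a y) ∧ ∀ x, P x (a x) := by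
  classical
  obtain ⟨hequiv, hmeas, hfin⟩ := hR
  refine ⟨fun x => Nat.find (hex x),
    measurable_find hex fun k => measurableSet_forall_rel hmeas hfin (hP k),
    fun x y hxy => Nat.find_congr' fun {k} => forall_congr' fun z => imp_congr_left ?_,
    fun x => Nat.find_spec (hex x) x (hequiv.refl x)⟩
  exact ⟨hequiv.trans (hequiv.symm hxy), hequiv.trans hxy⟩

end FiniteBorelER

/-- Every hyperfinite Borel equivalence relation on a standard Borel space has
property `𝗉`. -/
theorem propertyP_of_hyperfinite
    {X : Type*} [MeasurableSpace X] [StandardBorelSpace X]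
    (E : X → X → Prop)
    (F : ℕ → X → X → Prop) (hF : ∀ n, FiniteBorelER (F n))
    (hmono : ∀ n x y, F n x y → F (n + 1) x y)
    (hunion : ∀ x y, E x y ↔ ∃ n, F n x y) :
    PropertyP E := by
  intro φ hφ _ hrange hcent
  have hcommon : ∀ n x, ∃ k, ∀ y, F n x y → n ≤ k ∧ ∀ m ≤ n, φ y m k = true := by
    intro n x
    have hsub : (fun p : X × ℕ => φ p.1 p.2) '' ({y | F n x y} ×ˢ Iic n) ⊆ range (φ x) := by
      rintro _ ⟨⟨y, m⟩, ⟨hy, -⟩, rfl⟩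
      exact hrange x y ((hunion x y).2 ⟨n, hy⟩) ▸ mem_range_self m
    obtain ⟨k, hnk, hk⟩ := (hcent x).exists_ge_forall_of_finite
      ((((hF n).2.2 x).prod (finite_Iic n)).image _) hsub n
    exact ⟨k, fun y hy => ⟨hnk, fun m hm => hk _ ⟨(y, m), ⟨hy, hm⟩, rfl⟩⟩⟩
  choose a ha_meas ha_inv ha_spec using fun n => (hF n).exists_measurable_invariant_witness
    (P := fun x k => n ≤ k ∧ ∀ m ≤ n, φ x m k = true)
    (fun k => measurableSet_setOfPred.2 (by fun_prop)) (hcommon n)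
  have hE : ∀ x y, E x y → ∀ᶠ n in atTop, F n x y := by
    intro x y hxy
    obtain ⟨N, hN⟩ := (hunion x y).1 hxy
    exact eventually_atTop.2 ⟨N, fun n hn => Nat.le_induction hN (fun n _ => hmono n x y) n hn⟩
  refine ⟨fun x => rangeB fun n => a n x, measurable_rangeB ha_meas,
    fun x => isInfSet_rangeB fun n => (ha_spec n x).1,
    fun x y hxy => evEqB_rangeB ((hE x y hxy).mono fun n => ha_inv n x y),
    fun x m => almostSubset_rangeB (eventually_atTop.2 ⟨m, fun n hn => (ha_spec n x).2 m hn⟩)⟩
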